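/- arXiv:2603.00838 — 6 statements merged into one kernel-verified Lean document; each statement's English description precedes it below -/
import Mathlib

section
/- Let n ≥ 1 and let L be a ℤ-lattice in the space of n×n real matrices. Then there exists a constant C > 0 such that for every real t ≥ 1, the set {A ∈ L : A is positive semidefinite and trace(A) ≤ t} is finite and has cardinality at most C·t^{n²}. -/
/-!
A positive semidefinite matrix satisfies `2 |aᵢⱼ| ≤ aᵢᵢ + aⱼⱼ`, so if its trace is at most `t`
then so is its sup norm. On the other hand, the coordinates of a lattice vector `x` in a
`ℤ`-basis are integers of size `O(‖x‖)`, so the ball of radius `r ≥ 1` contains at most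
`(2r/ε + 1)^rank ≤ C r^dim` lattice points.
-/

attribute [local instance] Matrix.normedAddCommGroup Matrix.normedSpace

open Module

namespace Matrix.PosSemidef

variable {ι : Type*} [Fintype ι] {A : Matrix ι ι ℝ}

theorem two_mul_abs_apply_le (hA : A.PosSemidef) (i j : ι) : 2 * |A i j| ≤ A i i + A j j := by
  classical
  have hsymm : A j i = A i j := by simpa using hA.1.apply i j
  have hquad (s : ℝ) : 0 ≤ A i i + 2 * s * A i j + s ^ 2 * A j j := by
    have hq := hA.dotProduct_mulVec_nonneg (Pi.single i 1 + Pi.single j s)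
    simp only [star_trivial, mulVec_add, mulVec_single, MulOpposite.op_one, one_smul,
      op_smul_eq_smul, dotProduct_add, add_dotProduct, single_dotProduct, col_apply, one_mul,
      hsymm, dotProduct_smul, smul_eq_mul] at hq
    linarith
  have hplus := hquad 1
  have hminus := hquad (-1)
  have : |A i j| ≤ (A i i + A j j) / 2 := abs_le.2 ⟨by linarith, by linarith⟩
  linarith

theorem apply_le_trace (hA : A.PosSemidef) (i : ι) : A i i ≤ A.trace :=
  Finset.single_le_sum (f := fun k ↦ A k k) (fun _ _ ↦ hA.diag_nonneg) (Finset.mem_univ i)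

theorem norm_le_trace (hA : A.PosSemidef) : ‖A‖ ≤ A.trace := by
  refine (norm_le_iff hA.trace_nonneg).2 fun i j ↦ ?_
  rw [Real.norm_eq_abs]
  linarith [hA.two_mul_abs_apply_le i j, hA.apply_le_trace i, hA.apply_le_trace j]

end Matrix.PosSemidef

namespace ZLattice

variable {E : Type*} [NormedAddCommGroup E] [NormedSpace ℝ E] [FiniteDimensional ℝ E]
  (L : Submodule ℤ E) [DiscreteTopology L]

theorem finrank_le : finrank ℤ L ≤ finrank ℝ E := by
  have h := Real.finrank_eq_int_finrank_of_discrete (s := (L : Set E))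
    (by rwa [Submodule.span_eq])
  rw [Set.finrank, Set.finrank, Submodule.span_eq] at h
  exact h ▸ Submodule.finrank_le _

section Basis

variable {L} {ι : Type*} [Fintype ι] [DecidableEq ι] (b : Basis ι ℤ L)

theorem mapsTo_repr_piFinset_Icc {r : ℝ} :
    Set.MapsTo (fun x : L ↦ ⇑(b.repr x)) {x | ‖x‖ ≤ r}
      ((Fintype.piFinset fun _ : ι ↦ Finset.Icc (-⌊r / normBound b⌋) ⌊r / normBound b⌋) :
        Set (ι → ℤ)) := by
  intro x hx
  simp only [Fintype.coe_piFinset, Set.mem_pi, Set.mem_univ, Finset.coe_Icc, Set.mem_Icc,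
    forall_const]
  intro i
  have hle : ((|b.repr x i| : ℤ) : ℝ) ≤ r / normBound b := by
    calc ((|b.repr x i| : ℤ) : ℝ) ≤ (normBound b)⁻¹ * ‖x‖ := abs_repr_le b x i
      _ ≤ r / normBound b := by
        rw [inv_mul_eq_div]; exact div_le_div_of_nonneg_right hx (normBound_pos b).le
  exact abs_le.1 (Int.le_floor.2 hle)

theorem ncard_setOf_norm_le_le {r : ℝ} (hr : 0 ≤ r) :
    ({x : L | ‖x‖ ≤ r}.ncard : ℝ) ≤ (2 * r / normBound b + 1) ^ Fintype.card ι := by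
  set M := ⌊r / normBound b⌋
  have hM : 0 ≤ M := Int.floor_nonneg.2 (div_nonneg hr (normBound_pos b).le)
  have hcard := Set.ncard_le_ncard_of_injOn _ (mapsTo_repr_piFinset_Icc b (r := r))
    (DFunLike.coe_injective.comp b.repr.injective).injOn (Finset.finite_toSet _)
  rw [Set.ncard_coe_finset, Fintype.card_piFinset, Finset.prod_const, Finset.card_univ,
    Int.card_Icc, show M + 1 - -M = 2 * M + 1 by ring] at hcard
  calc ({x : L | ‖x‖ ≤ r}.ncard : ℝ) ≤ ((2 * M + 1 : ℤ) : ℝ) ^ Fintype.card ι := by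
        rw [← Int.toNat_of_nonneg (by omega : 0 ≤ 2 * M + 1)]
        exact_mod_cast hcard
    _ ≤ (2 * r / normBound b + 1) ^ Fintype.card ι := by
        gcongr
        push_cast
        linarith [Int.floor_le (r / normBound b), mul_div_assoc 2 r (normBound b)]

end Basis

theorem finite_setOf_norm_le (r : ℝ) : {x : L | ‖x‖ ≤ r}.Finite := by
  classical
  let b := Free.chooseBasis ℤ L
  exact Set.Finite.of_injOn (mapsTo_repr_piFinset_Icc b)
    (DFunLike.coe_injective.comp b.repr.injective).injOn (Finset.finite_toSet _)

theorem exists_ncard_setOf_norm_le_le :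
    ∃ C : ℝ, 0 < C ∧ ∀ r : ℝ, 1 ≤ r →
      {x : E | x ∈ L ∧ ‖x‖ ≤ r}.Finite ∧
      ({x : E | x ∈ L ∧ ‖x‖ ≤ r}.ncard : ℝ) ≤ C * r ^ finrank ℝ E := by
  classical
  let b := Free.chooseBasis ℤ L
  have hbound := normBound_pos b
  have hrank : Fintype.card (Free.ChooseBasisIndex ℤ L) ≤ finrank ℝ E :=
    (finrank_eq_card_chooseBasisIndex ℤ L).symm ▸ finrank_le L
  refine ⟨(2 / normBound b + 1) ^ finrank ℝ E, by positivity, fun r hr ↦ ?_⟩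
  have himage : {x : E | x ∈ L ∧ ‖x‖ ≤ r} = Subtype.val '' {x : L | ‖x‖ ≤ r} := by
    ext x
    exact ⟨fun ⟨hx, hxr⟩ ↦ ⟨⟨x, hx⟩, hxr, rfl⟩, by rintro ⟨x, hxr, rfl⟩; exact ⟨x.2, hxr⟩⟩
  rw [himage, Set.ncard_image_of_injective _ Subtype.val_injective]
  refine ⟨(finite_setOf_norm_le L r).image _, ?_⟩
  calc ({x : L | ‖x‖ ≤ r}.ncard : ℝ)
      ≤ (2 * r / normBound b + 1) ^ Fintype.card (Free.ChooseBasisIndex ℤ L) :=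
        ncard_setOf_norm_le_le b (by linarith)
    _ ≤ ((2 / normBound b + 1) * r) ^ Fintype.card (Free.ChooseBasisIndex ℤ L) := by
        gcongr
        rw [add_mul, one_mul, div_mul_eq_mul_div]
        linarith
    _ ≤ ((2 / normBound b + 1) * r) ^ finrank ℝ E :=
        pow_le_pow_right₀ (one_le_mul_of_one_le_of_one_le (le_add_of_nonneg_left (by positivity)) hr) hrank
    _ = (2 / normBound b + 1) ^ finrank ℝ E * r ^ finrank ℝ E := mul_pow _ _ _

end ZLattice

theorem stmt_2_general (n : ℕ) (L : Submodule ℤ (Matrix (Fin n) (Fin n) ℝ))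
    [DiscreteTopology L] :
    ∃ C : ℝ, 0 < C ∧ ∀ t : ℝ, 1 ≤ t →
      {A : Matrix (Fin n) (Fin n) ℝ | A ∈ L ∧ A.PosSemidef ∧ A.trace ≤ t}.Finite ∧
      ({A : Matrix (Fin n) (Fin n) ℝ | A ∈ L ∧ A.PosSemidef ∧ A.trace ≤ t}.ncard : ℝ)
        ≤ C * t ^ (n ^ 2) := by
  -- `L` and its topology are built from the plain matrix instances (product topology), which
  -- agree with the normed ones only up to unfolding, so the arguments are passed explicitly.
  obtain ⟨C, hC, hball⟩ := @ZLattice.exists_ncard_setOf_norm_le_le _ _ _ _ L ‹_›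
  refine ⟨C, hC, fun t ht ↦ ?_⟩
  obtain ⟨hfinite, hcard⟩ := hball t ht
  have hsub : {A : Matrix (Fin n) (Fin n) ℝ | A ∈ L ∧ A.PosSemidef ∧ A.trace ≤ t} ⊆
      {A | A ∈ L ∧ ‖A‖ ≤ t} := fun A ⟨hAL, hA, htr⟩ ↦ ⟨hAL, hA.norm_le_trace.trans htr⟩
  refine ⟨hfinite.subset hsub, ?_⟩
  calc _ ≤ ({A | A ∈ L ∧ ‖A‖ ≤ t}.ncard : ℝ) := by exact_mod_cast Set.ncard_le_ncard hsub hfinite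
    _ ≤ C * t ^ finrank ℝ (Matrix (Fin n) (Fin n) ℝ) := hcard
    _ = C * t ^ (n ^ 2) := by
      rw [finrank_matrix, finrank_self, Fintype.card_fin, mul_one, sq]

/-- Let `n ≥ 1` and let `L` be a `ℤ`-lattice in the space of `n×n` real matrices. Then
there exists a constant `C > 0` such that for every real `t ≥ 1`, the set
`{A ∈ L : A is positive semidefinite and trace(A) ≤ t}` is finite and has cardinality at
most `C·t^(n²)`. -/
theorem stmt_2 (n : ℕ) (hn : 1 ≤ n) (L : Submodule ℤ (Matrix (Fin n) (Fin n) ℝ))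
    [DiscreteTopology L] [@IsZLattice ℝ _ _ _ _ L ‹_›] :
    ∃ C : ℝ, 0 < C ∧ ∀ t : ℝ, 1 ≤ t →
      {A : Matrix (Fin n) (Fin n) ℝ | A ∈ L ∧ A.PosSemidef ∧ A.trace ≤ t}.Finite ∧
      ({A : Matrix (Fin n) (Fin n) ℝ | A ∈ L ∧ A.PosSemidef ∧ A.trace ≤ t}.ncard : ℝ)
        ≤ C * t ^ (n ^ 2) :=
  stmt_2_general n L
end

section
/- Let n ≥ 1 and let L be a ℤ-lattice in the space of n×n real matrices. Then there exists a constant C > 0 such that for every real δ > 0, the family (exp(−δ·trace(T)))_{T ∈ L, T positive definite} is summable and its sum is at most C / δ^{n² + 1}. -/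
/-!
For a positive semidefinite matrix every entry is bounded by the trace, so `‖T‖ ≤ tr T` for the
sup norm. A positive definite `T` in `L` is a nonzero lattice point, and `exp (-x) ≤ k! / xᵏ`
with `k = n² + 1 > rank L` bounds `exp (-δ tr T)` by `k! δ⁻ᵏ ‖T‖⁻ᵏ`; the series `∑ ‖z‖⁻ᵏ` over
a lattice of rank `< k` converges.
-/

attribute [local instance] Matrix.normedAddCommGroup Matrix.normedSpace

open Real Function
open scoped Nat

theorem summable_and_tsum_le_of_injective {ι κ : Type*} {f : ι → ℝ} {g : κ → ℝ} (e : ι → κ)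
    (he : Injective e) (hf : ∀ i, 0 ≤ f i) (hg : ∀ k, 0 ≤ g k) (hfg : ∀ i, f i ≤ g (e i))
    (hgs : Summable g) : Summable f ∧ ∑' i, f i ≤ ∑' k, g k := by
  have hfs : Summable f := .of_nonneg_of_le hf hfg (hgs.comp_injective he)
  exact ⟨hfs, hfs.tsum_le_tsum_of_inj e he (fun k _ => hg k) hfg hgs⟩

theorem Real.exp_neg_le_factorial_mul_inv_pow {x : ℝ} (hx : 0 < x) (k : ℕ) :
    exp (-x) ≤ k ! * x⁻¹ ^ k := by
  rw [exp_neg, inv_pow, ← div_eq_mul_inv, ← inv_div]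
  exact inv_anti₀ (by positivity) (pow_div_factorial_le_exp x hx.le k)

namespace Matrix

variable {n R : Type*} [Fintype n] [CommRing R] [LinearOrder R] [IsStrictOrderedRing R]
  [StarRing R] {A : Matrix n n R}

theorem PosSemidef.two_mul_abs_apply_le_s3 [TrivialStar R] (hA : A.PosSemidef) (i j : n) :
    2 * |A i j| ≤ A i i + A j j := by
  classical
  have hsymm : A j i = A i j := by simpa using congrFun (congrFun hA.isHermitian i) j
  have hquad (s : R) : 0 ≤ A i i + s * A j i + s * (A i j + s * A j j) := by
    have := hA.dotProduct_mulVec_nonneg (Pi.single i 1 + Pi.single j s)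
    simpa [add_dotProduct, dotProduct_add, mulVec_add] using this
  rcases abs_cases (A i j) with ⟨h, -⟩ | ⟨h, -⟩ <;> linarith [hquad 1, hquad (-1)]

theorem PosSemidef.apply_le_trace_s3 (hA : A.PosSemidef) (i : n) : A i i ≤ A.trace :=
  Finset.single_le_sum (f := fun k => A k k) (fun _ _ => hA.diag_nonneg) (Finset.mem_univ i)

theorem PosSemidef.abs_apply_le_trace [TrivialStar R] (hA : A.PosSemidef) (i j : n) :
    |A i j| ≤ A.trace := by
  linarith [hA.two_mul_abs_apply_le_s3 i j, hA.apply_le_trace_s3 i, hA.apply_le_trace_s3 j]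

theorem PosDef.ne_zero [Nonempty n] (hA : A.PosDef) : A ≠ 0 := by
  rintro rfl
  simpa using hA.trace_pos

theorem PosSemidef.norm_le_trace_s3 {A : Matrix n n ℝ} (hA : A.PosSemidef) : ‖A‖ ≤ A.trace :=
  (norm_le_iff hA.trace_nonneg).2 fun i j => (norm_eq_abs _).trans_le (hA.abs_apply_le_trace i j)

end Matrix

theorem ZLattice.tsum_exp_neg_mul_norm_le {E : Type*} [NormedAddCommGroup E] [NormedSpace ℝ E]
    [FiniteDimensional ℝ E] (L : Submodule ℤ E) [DiscreteTopology L] {k : ℕ}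
    (hk : Module.finrank ℤ L < k) {δ : ℝ} (hδ : 0 < δ) :
    Summable (fun z : {z : L // z ≠ 0} => exp (-(δ * ‖((z : L) : E)‖))) ∧
      ∑' z : {z : L // z ≠ 0}, exp (-(δ * ‖((z : L) : E)‖)) ≤
        k ! * (∑' z : L, ‖z‖⁻¹ ^ k) / δ ^ k := by
  have hS : Summable fun z : L => k ! / δ ^ k * ‖z‖⁻¹ ^ k :=
    (ZLattice.summable_norm_pow_inv L k hk).mul_left _
  have hterm (z : {z : L // z ≠ 0}) :
      exp (-(δ * ‖((z : L) : E)‖)) ≤ k ! / δ ^ k * ‖(z : L)‖⁻¹ ^ k := by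
    have hz : 0 < ‖(z : L)‖ := norm_pos_iff.2 z.2
    calc exp (-(δ * ‖((z : L) : E)‖)) ≤ k ! * (δ * ‖(z : L)‖)⁻¹ ^ k :=
          exp_neg_le_factorial_mul_inv_pow (by positivity) k
      _ = k ! / δ ^ k * ‖(z : L)‖⁻¹ ^ k := by ring
  obtain ⟨hsum, hle⟩ := summable_and_tsum_le_of_injective Subtype.val Subtype.val_injective
    (fun _ => (exp_pos _).le) (fun _ => by positivity) hterm hS
  refine ⟨hsum, hle.trans_eq ?_⟩
  rw [tsum_mul_left, div_mul_eq_mul_div]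

/-- Let `n ≥ 1` and let `L` be a `ℤ`-lattice in the space of `n×n` real matrices. Then
there exists a constant `C > 0` such that for every real `δ > 0`, the family
`(exp(−δ·trace(T)))_{T ∈ L, T positive definite}` is summable and its sum is at most
`C / δ^(n² + 1)`. -/
theorem stmt_3 (n : ℕ) (hn : 1 ≤ n) (L : Submodule ℤ (Matrix (Fin n) (Fin n) ℝ))
    [DiscreteTopology L] [@IsZLattice ℝ _ _ _ _ L ‹_›] :
    ∃ C : ℝ, 0 < C ∧ ∀ δ : ℝ, 0 < δ →
      Summable (fun T : {T : Matrix (Fin n) (Fin n) ℝ // T ∈ L ∧ T.PosDef} =>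
        Real.exp (-δ * (T : Matrix (Fin n) (Fin n) ℝ).trace)) ∧
      ∑' T : {T : Matrix (Fin n) (Fin n) ℝ // T ∈ L ∧ T.PosDef},
        Real.exp (-δ * (T : Matrix (Fin n) (Fin n) ℝ).trace) ≤ C / δ ^ (n ^ 2 + 1) := by
  -- `L` is discrete for the product topology of `Matrix`; the lattice lemmas ask for the
  -- (definitionally equal) topology of the sup norm.
  let : TopologicalSpace (Matrix (Fin n) (Fin n) ℝ) :=
    PseudoMetricSpace.toUniformSpace.toTopologicalSpace
  have : DiscreteTopology L := ‹_›
  have : Nonempty (Fin n) := ⟨⟨0, hn⟩⟩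
  have hrank : Module.finrank ℤ L < n ^ 2 + 1 := by
    rw [ZLattice.rank ℝ L, Module.finrank_matrix]
    simp [sq]
  set S := ∑' z : L, ‖z‖⁻¹ ^ (n ^ 2 + 1)
  refine ⟨(n ^ 2 + 1)! * (S + 1), by positivity, fun δ hδ => ?_⟩
  obtain ⟨hsum, hle⟩ := ZLattice.tsum_exp_neg_mul_norm_le L hrank hδ
  let e (T : {T // T ∈ L ∧ T.PosDef}) : {z : L // z ≠ 0} :=
    ⟨⟨T, T.2.1⟩, by simpa using T.2.2.ne_zero⟩
  have he : Injective e := fun T T' h =>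
    Subtype.ext (congrArg (fun z : {z : L // z ≠ 0} => ((z : L) : Matrix (Fin n) (Fin n) ℝ)) h)
  have hterm (T : {T // T ∈ L ∧ T.PosDef}) : exp (-δ * (T : Matrix (Fin n) (Fin n) ℝ).trace) ≤
      exp (-(δ * ‖((e T : L) : Matrix (Fin n) (Fin n) ℝ)‖)) := by
    rw [neg_mul, exp_le_exp, neg_le_neg_iff]
    exact mul_le_mul_of_nonneg_left T.2.2.posSemidef.norm_le_trace_s3 hδ.le
  obtain ⟨hsumPD, hlePD⟩ := summable_and_tsum_le_of_injective e he (fun _ => (exp_pos _).le)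
    (fun _ => (exp_pos _).le) hterm hsum
  refine ⟨hsumPD, hlePD.trans (hle.trans ?_)⟩
  gcongr
  linarith
end

section
/- Let n ≥ 1 and let T be an (n+1)×(n+1) complex positive definite (Hermitian) matrix. Write m = Re(T₀₀), let x ∈ ℂⁿ be the vector with xᵢ = T_{i+1,0}, and let T₀ be the lower-right n×n block of T. Then ∑ᵢ |xᵢ|² < m · Re(trace(T₀)). -/
open scoped ComplexOrder
open Matrix

lemma aux_offdiag {m : ℕ} (T : Matrix (Fin m) (Fin m) ℂ) (hT : T.PosDef)
    {i j : Fin m} (hij : i ≠ j) :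
    Complex.normSq (T j i) < (T i i).re * (T j j).re := by
  set β : ℝ := (T j j).re with hβdef
  have hβ : 0 < β := by
    have := hT.re_dotProduct_pos (x := Pi.single j 1) (by
      intro h
      simpa using congrFun h j)
    simpa [dotProduct, Matrix.mulVec, Pi.single_apply, Finset.sum_ite_eq'] using this
  set x : Fin m → ℂ := Pi.single i (β : ℂ) + Pi.single j (-(T j i)) with hxdef
  have hx : x ≠ 0 := by
    intro h
    have := congrFun h i
    simp [hxdef, Pi.single_apply, hij, Ne.symm hij] at this
    exact hβ.ne' (by exact_mod_cast this)
  have key := hT.re_dotProduct_pos hx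
  have hherm : T i j = starRingEnd ℂ (T j i) := by
    have := congrFun (congrFun hT.1 i) j
    simpa [Matrix.conjTranspose_apply] using this.symm
  have hexp : RCLike.re (star x ⬝ᵥ (T *ᵥ x)) = β * (β * (T i i).re - Complex.normSq (T j i)) := by
    simp [hxdef, dotProduct, Matrix.mulVec, Pi.single_apply, mul_add, add_mul,
      Finset.sum_add_distrib, mul_ite, Finset.sum_ite_eq', hherm, Ne.symm hij,
      apply_ite Complex.re, apply_ite Complex.im, ite_mul, Complex.normSq_apply]
    ring
  rw [hexp] at key
  nlinarith [Complex.normSq_nonneg (T j i)]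

/-- Let `n ≥ 1` and let `T` be an `(n+1)×(n+1)` complex positive definite (Hermitian)
matrix. Write `m = Re(T₀₀)`, let `x ∈ ℂⁿ` be the vector with `xᵢ = T_{i+1,0}`, and let
`T₀` be the lower-right `n×n` block of `T`. Then `∑ᵢ |xᵢ|² < m · Re(trace(T₀))`. -/
theorem stmt_9 (n : ℕ) (hn : 1 ≤ n) (T : Matrix (Fin (n + 1)) (Fin (n + 1)) ℂ)
    (hT : T.PosDef) :
    ∑ i : Fin n, Complex.normSq (T i.succ 0) <
      (T 0 0).re * (T.submatrix Fin.succ Fin.succ).trace.re := by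
  have hne : (Finset.univ : Finset (Fin n)).Nonempty := ⟨⟨0, hn⟩, Finset.mem_univ _⟩
  calc ∑ i : Fin n, Complex.normSq (T i.succ 0)
      < ∑ i : Fin n, (T 0 0).re * (T i.succ i.succ).re :=
        Finset.sum_lt_sum_of_nonempty hne
          (fun i _ => aux_offdiag T hT (Fin.succ_ne_zero i).symm)
    _ = (T 0 0).re * (T.submatrix Fin.succ Fin.succ).trace.re := by
        simp [Matrix.trace, Matrix.diag, Complex.re_sum, Finset.mul_sum]
end

section
/- Let n ≥ 1 and let T be an (n+1)×(n+1) real positive definite matrix with corner entry m = T₀₀ and lower-right n×n block T₀. Then (det(T)/m)^{1/n} ≤ trace(T₀), where the left-hand side uses the real power with exponent 1/n. -/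
/-!
Splitting off the pivot `m = T₀₀`, the Schur complement `S = T₀ - b bᵀ / m` is positive
semidefinite with `det T = m · det S` and `tr S ≤ tr T₀`, since `b bᵀ / m` is positive semidefinite.
AM-GM on the eigenvalues of `S` gives `(det S)^{1/n} ≤ tr S / n ≤ tr S`.
-/

open Matrix

namespace Matrix

variable {m n : Type*} [Fintype m] [Fintype n] [DecidableEq m] [DecidableEq n]

theorem PosSemidef.det_rpow_inv_card_le_trace_div [Nonempty n] {A : Matrix n n ℝ}
    (hA : A.PosSemidef) :
    A.det ^ (Fintype.card n : ℝ)⁻¹ ≤ A.trace / Fintype.card n := by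
  have hamgm := Real.geom_mean_le_arith_mean Finset.univ (fun _ => 1) hA.1.eigenvalues
    (fun _ _ => zero_le_one) (by simpa using Fintype.card_pos)
    (fun i _ => hA.eigenvalues_nonneg i)
  simpa [hA.1.det_eq_prod_eigenvalues, hA.1.trace_eq_sum_eigenvalues] using hamgm

theorem PosSemidef.det_rpow_inv_card_le_trace [Nonempty n] {A : Matrix n n ℝ}
    (hA : A.PosSemidef) : A.det ^ (Fintype.card n : ℝ)⁻¹ ≤ A.trace :=
  hA.det_rpow_inv_card_le_trace_div.trans <|
    div_le_self hA.trace_nonneg (by exact_mod_cast Fintype.card_pos)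

omit [DecidableEq n] in
theorem PosSemidef.trace_sub_conjTranspose_mul_inv_mul_le {A : Matrix m m ℝ} (hA : A.PosSemidef)
    (B : Matrix m n ℝ) (D : Matrix n n ℝ) : (D - Bᴴ * A⁻¹ * B).trace ≤ D.trace := by
  rw [trace_sub, sub_le_self_iff]
  exact (hA.inv.conjTranspose_mul_mul_same B).trace_nonneg

theorem PosDef.det_fromBlocks_div_det_rpow_le_trace [Nonempty n] {A : Matrix m m ℝ}
    (hA : A.PosDef) (B : Matrix m n ℝ) (D : Matrix n n ℝ)
    (hM : (fromBlocks A B Bᴴ D).PosSemidef) :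
    ((fromBlocks A B Bᴴ D).det / A.det) ^ (Fintype.card n : ℝ)⁻¹ ≤ D.trace := by
  have := hA.isUnit.invertible
  have hS := (hA.fromBlocks₁₁ B D).mp hM
  rw [det_fromBlocks₁₁, invOf_eq_nonsing_inv, mul_div_cancel_left₀ _ hA.det_pos.ne']
  exact hS.det_rpow_inv_card_le_trace.trans
    (hA.posSemidef.trace_sub_conjTranspose_mul_inv_mul_le B D)

omit [Fintype m] [Fintype n] [DecidableEq m] [DecidableEq n] in
theorem IsHermitian.fromBlocks_toBlocks {α : Type*} [InvolutiveStar α]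
    {M : Matrix (m ⊕ n) (m ⊕ n) α} (hM : M.IsHermitian) :
    Matrix.fromBlocks M.toBlocks₁₁ M.toBlocks₁₂ M.toBlocks₁₂ᴴ M.toBlocks₂₂ = M := by
  rw [← Matrix.fromBlocks_toBlocks M] at hM
  rw [(isHermitian_fromBlocks_iff.mp hM).2.1, Matrix.fromBlocks_toBlocks]

end Matrix

/-- Let `n ≥ 1` and let `T` be an `(n+1)×(n+1)` real positive definite matrix with corner
entry `m = T₀₀` and lower-right `n×n` block `T₀`. Then `(det(T)/m)^{1/n} ≤ trace(T₀)`,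
where the left-hand side uses the real power with exponent `1/n`. -/
theorem stmt_12 (n : ℕ) (hn : 1 ≤ n) (T : Matrix (Fin (n + 1)) (Fin (n + 1)) ℝ)
    (hT : T.PosDef) :
    (T.det / T 0 0) ^ ((1 : ℝ) / n) ≤ (T.submatrix Fin.succ Fin.succ).trace := by
  have : Nonempty (Fin n) := ⟨⟨0, hn⟩⟩
  -- `e` sends `inl ()` to the pivot `0` and `inr i` to `i.succ`.
  let e : Unit ⊕ Fin n ≃ Fin (n + 1) :=
    (Equiv.sumComm _ _).trans ((Equiv.optionEquivSumPUnit _).symm.trans (finSuccEquiv n).symm)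
  set M := T.submatrix e e
  have hM : M.PosDef := hT.submatrix e.injective
  have hblocks := hM.isHermitian.fromBlocks_toBlocks
  have hcorner : M.toBlocks₁₁.PosDef := hM.submatrix Sum.inl_injective
  have key := hcorner.det_fromBlocks_div_det_rpow_le_trace M.toBlocks₁₂ M.toBlocks₂₂
    (hblocks ▸ hM.posSemidef)
  rw [hblocks] at key
  have hdet : M.det = T.det := det_submatrix_equiv_self e T
  have hpivot : M.toBlocks₁₁.det = T 0 0 := det_unique _
  have hblock : M.toBlocks₂₂ = T.submatrix Fin.succ Fin.succ := rfl
  rwa [hdet, hpivot, hblock, Fintype.card_fin, ← one_div] at key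
end

section
/- For every n ≥ 1 there exists a constant B > 0 with the following property: for every n×n real positive definite matrix T there exists γ ∈ SL_n(ℤ) such that, viewing γ as a real matrix by casting entries, (γᵀ · T · γ)₀₀ ≤ B · det(T)^{1/n}. -/
/-!
Write `T = PᵀP`. Minkowski's convex body theorem, applied to the lattice `P ℤⁿ` of covolume
`|det P| = det(T)^{1/2}` and the cube of half-side `r = |det P|^{1/n}`, gives a nonzero `c ∈ ℤⁿ`
with `cᵀTc = ‖Pc‖₂² ≤ n r² = n det(T)^{1/n}`. Dividing `c` by the gcd of its entries only
decreases `cᵀTc`, and a primitive vector `c'` is, up to sign, the first column of some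
`γ ∈ SL_n(ℤ)`: if `f ⬝ᵥ c' = 1`, then `ℤⁿ = ℤc' ⊕ ker f` and `ker f` is free. Since
`(γᵀTγ)₀₀ = c'ᵀTc'`, we may take `B = n`.
-/

open Matrix MeasureTheory

theorem Module.Basis.exists_basis_apply_zero_eq {R M : Type*} [CommRing R] [IsDomain R]
    [IsPrincipalIdealRing R] [AddCommGroup M] [Module R M] {n : ℕ}
    (b : Module.Basis (Fin (n + 1)) R M) (f : M →ₗ[R] R) {y : M} (hy : f y = 1) :
    ∃ b' : Module.Basis (Fin (n + 1)) R M, b' 0 = y := by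
  obtain ⟨k, bK⟩ := Submodule.basisOfPid b (LinearMap.ker f)
  have hli : ∀ a : R, ∀ x ∈ LinearMap.ker f, a • y + x = 0 → a = 0 := by
    intro a x hx h
    simpa [hy, LinearMap.mem_ker.mp hx] using congrArg f h
  have hsp : ∀ z : M, ∃ a : R, z + a • y ∈ LinearMap.ker f :=
    fun z => ⟨-f z, by simp [hy]⟩
  let b' := Module.Basis.mkFinCons y bK hli hsp
  obtain rfl : k = n := by
    simpa using Fin.equiv_iff_eq.mp ⟨b'.indexEquiv b⟩
  exact ⟨b', by simp [b']⟩

theorem Matrix.exists_isUnit_det_transpose_zero_eq {R : Type*} [CommRing R] [IsDomain R]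
    [IsPrincipalIdealRing R] {n : ℕ} {c f : Fin (n + 1) → R} (hf : f ⬝ᵥ c = 1) :
    ∃ M : Matrix (Fin (n + 1)) (Fin (n + 1)) R, IsUnit M.det ∧ Mᵀ 0 = c := by
  obtain ⟨b, hb⟩ :=
    (Pi.basisFun R (Fin (n + 1))).exists_basis_apply_zero_eq (dotProductBilin R R f) hf
  refine ⟨(Pi.basisFun R _).toMatrix b, ?_, ?_⟩
  · rw [← Module.Basis.det_apply]
    exact (Pi.basisFun R _).isUnit_det b
  · ext i
    simp [Module.Basis.toMatrix_apply, hb]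

theorem Int.exists_eq_smul_dotProduct_eq_one {ι : Type*} [Fintype ι] {c : ι → ℤ}
    (hc : c ≠ 0) : ∃ (g : ℤ) (c' f : ι → ℤ), g ≠ 0 ∧ c = g • c' ∧ f ⬝ᵥ c' = 1 := by
  obtain ⟨i, hi⟩ := Function.ne_iff.mp hc
  set g := Finset.univ.gcd c
  have hg : g ≠ 0 := fun h => hi (Finset.gcd_eq_zero_iff.mp h i (Finset.mem_univ i))
  obtain ⟨f, hf⟩ := Finset.gcd_eq_sum_mul Finset.univ (fun j => c j / g)
  refine ⟨g, fun j => c j / g, f, hg, ?_, ?_⟩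
  · ext j
    exact (Int.mul_ediv_cancel' (Finset.gcd_dvd (Finset.mem_univ j))).symm
  · rw [dotProduct_comm, dotProduct, ← hf]
    exact Finset.gcd_div_eq_one (Finset.mem_univ i) hi

theorem Matrix.SpecialLinearGroup.exists_smul_transpose_zero_eq {n : ℕ}
    {c : Fin (n + 1) → ℤ} (hc : c ≠ 0) :
    ∃ (γ : Matrix.SpecialLinearGroup (Fin (n + 1)) ℤ) (g : ℤ),
      g ≠ 0 ∧ c = g • (γ : Matrix (Fin (n + 1)) (Fin (n + 1)) ℤ)ᵀ 0 := by
  obtain ⟨g, c', f, hg, rfl, hf⟩ := Int.exists_eq_smul_dotProduct_eq_one hc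
  obtain ⟨M, hdet, hM⟩ := Matrix.exists_isUnit_det_transpose_zero_eq hf
  rcases Int.isUnit_iff.mp hdet with hdet | hdet
  · exact ⟨⟨M, hdet⟩, g, hg, by rw [← hM]⟩
  · refine ⟨⟨M.updateCol 0 ((-1 : ℤ) • Mᵀ 0), ?_⟩, -g, neg_ne_zero.mpr hg, ?_⟩
    · rw [det_updateCol_smul, show Mᵀ 0 = fun i => M i 0 from rfl, updateCol_eq_self, hdet]
      norm_num
    · ext i
      simp [← hM]

theorem Matrix.exists_int_ne_zero_abs_mulVec_le {ι : Type*} [Fintype ι] [DecidableEq ι]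
    [Nonempty ι] (P : Matrix ι ι ℝ) (hP : P.det ≠ 0) :
    ∃ c : ι → ℤ, c ≠ 0 ∧
      ∀ i, |(P *ᵥ (Int.cast ∘ c)) i| ≤ |P.det| ^ ((1 : ℝ) / Fintype.card ι) := by
  let b : Module.Basis ι ℝ (ι → ℝ) := (Pi.basisFun ℝ ι).map
    (P.toLinearEquiv' (P.invertibleOfIsUnitDet (isUnit_iff_ne_zero.mpr hP)))
  have hb : ∀ i, b i = Pᵀ i := fun i => by
    simp only [b, Module.Basis.map_apply, Pi.basisFun_apply]
    exact mulVec_single_one P i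
  set r := |P.det| ^ ((1 : ℝ) / Fintype.card ι)
  have hr : 0 ≤ r := by positivity
  have hrpow : r ^ Fintype.card ι = |P.det| := by
    simp only [r, one_div]
    exact Real.rpow_inv_natCast_pow (abs_nonneg _) Fintype.card_ne_zero
  have hvol : volume (ZSpan.fundamentalDomain b) * 2 ^ Module.finrank ℝ (ι → ℝ)
      ≤ volume (Metric.closedBall (0 : ι → ℝ) r) := by
    have hof : Matrix.of b = Pᵀ := by ext i j; simp [hb]
    rw [ZSpan.volume_fundamentalDomain, hof, det_transpose, Real.volume_pi_closedBall _ hr,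
      Module.finrank_fintype_fun_eq_card, mul_pow, hrpow, mul_comm,
      ENNReal.ofReal_mul (by positivity), ENNReal.ofReal_pow zero_le_two, ENNReal.ofReal_ofNat]
  have : Countable (Submodule.span ℤ (Set.range b)).toAddSubgroup :=
    inferInstanceAs (Countable (Submodule.span ℤ (Set.range b)))
  obtain ⟨⟨v, hv⟩, hv0, hvr⟩ := exists_ne_zero_mem_lattice_of_measure_mul_two_pow_le_measure
    (ZSpan.isAddFundamentalDomain' b volume) (fun x hx => by simpa using hx)
    (convex_closedBall 0 r) (isCompact_closedBall 0 r) hvol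
  obtain ⟨c, rfl⟩ := (Submodule.mem_span_range_iff_exists_fun ℤ).mp hv
  have hPc : ∑ i, c i • b i = P *ᵥ (Int.cast ∘ c) := by
    ext j
    simp [hb, Matrix.mulVec, dotProduct, mul_comm]
  refine ⟨c, fun hc => hv0 (by simp [hc]), fun i => ?_⟩
  rw [← hPc, ← Real.norm_eq_abs]
  exact (norm_le_pi_norm _ i).trans (mem_closedBall_zero_iff.mp hvr)

open scoped MatrixOrder in
theorem Matrix.PosDef.exists_int_ne_zero_dotProduct_mulVec_le {ι : Type*} [Fintype ι]
    [DecidableEq ι] [Nonempty ι] {T : Matrix ι ι ℝ} (hT : T.PosDef) :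
    ∃ c : ι → ℤ, c ≠ 0 ∧ (Int.cast ∘ c) ⬝ᵥ T *ᵥ (Int.cast ∘ c) ≤
      Fintype.card ι * T.det ^ ((1 : ℝ) / Fintype.card ι) := by
  obtain ⟨P, rfl⟩ := CStarAlgebra.nonneg_iff_eq_star_mul_self.mp hT.posSemidef.nonneg
  have hdet : (star P * P).det = P.det ^ 2 := by
    rw [det_mul, star_eq_conjTranspose, det_conjTranspose, star_trivial, sq]
  have hP : P.det ≠ 0 := fun h => hT.det_pos.ne' (by rw [hdet, h, sq, mul_zero])
  obtain ⟨c, hc, hPc⟩ := P.exists_int_ne_zero_abs_mulVec_le hP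
  refine ⟨c, hc, ?_⟩
  set x : ι → ℝ := Int.cast ∘ c
  set r := |P.det| ^ ((1 : ℝ) / Fintype.card ι)
  have hr2 : r ^ 2 = (star P * P).det ^ ((1 : ℝ) / Fintype.card ι) := by
    rw [hdet, ← sq_abs P.det, ← Real.rpow_pow_comm (abs_nonneg _)]
  calc x ⬝ᵥ (star P * P) *ᵥ x = ∑ i, (P *ᵥ x) i ^ 2 := by
        rw [← mulVec_mulVec, dotProduct_mulVec, star_eq_conjTranspose,
          conjTranspose_eq_transpose_of_trivial, vecMul_transpose]
        simp [dotProduct, sq]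
    _ ≤ ∑ _i : ι, r ^ 2 :=
        Finset.sum_le_sum fun i _ => sq_le_sq' (abs_le.mp (hPc i)).1 (abs_le.mp (hPc i)).2
    _ = _ := by rw [Finset.sum_const, Finset.card_univ, nsmul_eq_mul, hr2]

theorem Matrix.PosSemidef.dotProduct_mulVec_le_zsmul {ι : Type*} [Fintype ι]
    {T : Matrix ι ι ℝ} (hT : T.PosSemidef) (x : ι → ℝ) {g : ℤ} (hg : g ≠ 0) :
    x ⬝ᵥ T *ᵥ x ≤ (g • x) ⬝ᵥ T *ᵥ (g • x) := by
  have hx : 0 ≤ x ⬝ᵥ T *ᵥ x := by simpa using hT.dotProduct_mulVec_nonneg x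
  have hg2 : (1 : ℝ) ≤ (g : ℝ) ^ 2 := by
    rw [one_le_sq_iff_one_le_abs]
    exact_mod_cast Int.one_le_abs hg
  calc x ⬝ᵥ T *ᵥ x ≤ (g : ℝ) ^ 2 * (x ⬝ᵥ T *ᵥ x) := le_mul_of_one_le_left hx hg2
    _ = (g • x) ⬝ᵥ T *ᵥ (g • x) := by
      rw [← Int.cast_smul_eq_zsmul ℝ, mulVec_smul, dotProduct_smul, smul_dotProduct,
        smul_eq_mul, smul_eq_mul]
      ring

theorem Matrix.transpose_mul_mul_apply {l m n α : Type*} [Fintype m] [Fintype n]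
    [CommSemiring α] (A : Matrix m l α) (T : Matrix m n α) (B : Matrix n l α) (i j : l) :
    (Aᵀ * T * B) i j = Aᵀ i ⬝ᵥ T *ᵥ Bᵀ j := by
  rw [mul_apply', dotProduct_mulVec]
  rfl

/-- For every `n ≥ 1` there exists a constant `B > 0` with the following property: for
every `n×n` real positive definite matrix `T` there exists `γ ∈ SL_n(ℤ)` such that,
viewing `γ` as a real matrix by casting entries, `(γᵀ · T · γ)₀₀ ≤ B · det(T)^{1/n}`. -/
theorem stmt_13 (n : ℕ) (hn : 1 ≤ n) :
    ∃ B : ℝ, 0 < B ∧ ∀ T : Matrix (Fin n) (Fin n) ℝ, T.PosDef →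
      ∃ γ : Matrix.SpecialLinearGroup (Fin n) ℤ,
        (((γ : Matrix (Fin n) (Fin n) ℤ).map (fun a : ℤ => (a : ℝ)))ᵀ * T *
            ((γ : Matrix (Fin n) (Fin n) ℤ).map (fun a : ℤ => (a : ℝ)))) ⟨0, hn⟩ ⟨0, hn⟩
          ≤ B * T.det ^ ((1 : ℝ) / n) := by
  obtain ⟨m, rfl⟩ := Nat.exists_eq_add_of_le' hn
  refine ⟨m + 1, by positivity, fun T hT => ?_⟩
  obtain ⟨c, hc, hcT⟩ := hT.exists_int_ne_zero_dotProduct_mulVec_le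
  obtain ⟨γ, g, hg, rfl⟩ := Matrix.SpecialLinearGroup.exists_smul_transpose_zero_eq hc
  refine ⟨γ, ?_⟩
  set v : Fin (m + 1) → ℝ := Int.cast ∘ (γ : Matrix (Fin (m + 1)) (Fin (m + 1)) ℤ)ᵀ 0
  have hcast : (Int.cast ∘ (g • (γ : Matrix (Fin (m + 1)) (Fin (m + 1)) ℤ)ᵀ 0) :
      Fin (m + 1) → ℝ) = g • v := by
    ext
    simp [v]
  calc _ = v ⬝ᵥ T *ᵥ v := transpose_mul_mul_apply _ _ _ _ _
    _ ≤ (g • v) ⬝ᵥ T *ᵥ (g • v) := hT.posSemidef.dotProduct_mulVec_le_zsmul v hg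
    _ ≤ _ := by rw [hcast] at hcT; simpa using hcT
end

section
/- For every n ≥ 1 there exists a constant B > 0 with the following property: for every n×n complex positive definite (Hermitian) matrix T there exists γ ∈ SL_n(ℤ[i]) (Gaussian-integer entries, determinant 1) such that, viewing γ as a complex matrix via the canonical embedding ℤ[i] → ℂ, Re((γᴴ · T · γ)₀₀) ≤ B · Re(det T)^{1/n}. -/
/-!
Write `T = Aᴴ A`. Then `Re (w* T w) = ‖A w‖²`, and `A`, viewed as an `ℝ`-linear map of `ℂⁿ ≅ ℝ²ⁿ`,
has determinant `|det A|² = det T`. Minkowski's convex body theorem applied to the lattice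
`ℤ[i]ⁿ` and the ellipsoid `A⁻¹(ball)` gives a nonzero `w ∈ ℤ[i]ⁿ` with
`Re (w* T w) ≤ B det(T)^{1/n}`. Since `ℤ[i]` is Euclidean, `w = g • γ e₀` for some `γ ∈ SL_n(ℤ[i])`
(Euclid's algorithm performed by transvections), and the `(0,0)` entry of `γᴴ T γ` is
`Re (w* T w) / |g|² ≤ Re (w* T w)`.
-/

open Matrix WithLp
open scoped ComplexOrder

open Module MeasureTheory Submodule in
theorem exists_ne_zero_mem_span_norm_pow_le_mul_abs_det
    {E ι : Type*} [NormedAddCommGroup E] [NormedSpace ℝ E] [FiniteDimensional ℝ E] [Nontrivial E]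
    [MeasurableSpace E] [BorelSpace E] [Finite ι] (b : Basis ι ℝ E) :
    ∃ C : ℝ, 0 < C ∧ ∀ f : E →ₗ[ℝ] E, LinearMap.det f ≠ 0 →
      ∃ x ∈ span ℤ (Set.range b), x ≠ 0 ∧ ‖f x‖ ^ finrank ℝ E ≤ C * |LinearMap.det f| := by
  set μ : Measure E := Measure.addHaar
  set d := finrank ℝ E
  set V := μ (ZSpan.fundamentalDomain b)
  set β := μ (Metric.ball 0 1)
  have hβ0 : β ≠ 0 := (Metric.isOpen_ball.measure_pos μ (by simp)).ne'
  have hβ : β ≠ ⊤ := measure_ball_lt_top.ne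
  have hV0 : V * 2 ^ d ≠ 0 := mul_ne_zero (ZSpan.measure_fundamentalDomain_ne_zero b) (by simp)
  have hV : V * 2 ^ d ≠ ⊤ :=
    ENNReal.mul_ne_top (ZSpan.fundamentalDomain_isBounded b).measure_lt_top.ne (by simp)
  -- Chosen so that `f ⁻¹' closedBall 0 ρ` with `ρ ^ d = C * |det f|` has volume `V * 2 ^ d`.
  set C := (V * 2 ^ d / β).toReal
  have hC : ENNReal.ofReal C * β = V * 2 ^ d := by
    rw [ENNReal.ofReal_toReal (ENNReal.div_ne_top hV hβ0), ENNReal.div_mul_cancel hβ0 hβ]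
  refine ⟨C, ENNReal.toReal_pos (ENNReal.div_pos_iff.mpr ⟨hV0, hβ⟩).ne'
    (ENNReal.div_ne_top hV hβ0), fun f hf => ?_⟩
  set ρ := (C * |LinearMap.det f|) ^ (d : ℝ)⁻¹
  have hρ : ρ ^ d = C * |LinearMap.det f| := by
    rw [← Real.rpow_natCast, ← Real.rpow_mul (by positivity),
      inv_mul_cancel₀ (Nat.cast_ne_zero.mpr finrank_pos.ne'), Real.rpow_one]
  have hvol : V * 2 ^ d ≤ μ (f ⁻¹' Metric.closedBall 0 ρ) := by
    rw [Measure.addHaar_preimage_linearMap μ hf, Measure.addHaar_closedBall μ 0 (by positivity),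
      hρ, ← mul_assoc, ← ENNReal.ofReal_mul (abs_nonneg _), abs_inv, mul_comm C,
      inv_mul_cancel_left₀ (abs_ne_zero.mpr hf), hC]
  have : Countable (span ℤ (Set.range b)).toAddSubgroup :=
    inferInstanceAs (Countable (span ℤ (Set.range b)))
  set e := (LinearMap.equivOfDetNeZero f hf).toContinuousLinearEquiv
  obtain ⟨⟨x, hxL⟩, hx0, hx⟩ := exists_ne_zero_mem_lattice_of_measure_mul_two_pow_le_measure
    (ZSpan.isAddFundamentalDomain' b μ) (fun x hx => by simpa using hx)
    ((convex_closedBall 0 ρ).linear_preimage f)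
    (e.toHomeomorph.isCompact_preimage.mpr (isCompact_closedBall 0 ρ)) hvol
  refine ⟨x, hxL, by simpa using hx0, ?_⟩
  rw [← hρ]
  exact pow_le_pow_left₀ (norm_nonneg _) (by simpa using hx) d

namespace Matrix

variable {ι : Type*} [Fintype ι]

theorem conjTranspose_mul_mul_apply_self {α : Type*} [NonUnitalSemiring α] [StarRing α]
    (M T : Matrix ι ι α) (j : ι) :
    (Mᴴ * T * M) j j = star (Mᵀ j) ⬝ᵥ T *ᵥ Mᵀ j := by
  rw [mul_mul_apply]
  rfl

theorem PosSemidef.re_star_dotProduct_mulVec_le_smul {T : Matrix ι ι ℂ} (hT : T.PosSemidef)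
    (v : ι → ℂ) {z : ℂ} (hz : 1 ≤ Complex.normSq z) :
    (star v ⬝ᵥ T *ᵥ v).re ≤ (star (z • v) ⬝ᵥ T *ᵥ (z • v)).re := by
  have h : star (z • v) ⬝ᵥ T *ᵥ (z • v) = Complex.normSq z * (star v ⬝ᵥ T *ᵥ v) := by
    rw [star_smul, mulVec_smul, smul_dotProduct, dotProduct_smul, smul_smul,
      Complex.normSq_eq_conj_mul_self, smul_eq_mul]
    rfl
  rw [h, Complex.re_ofReal_mul]
  exact le_mul_of_one_le_left (hT.re_dotProduct_nonneg v) hz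

variable [DecidableEq ι]

open scoped MatrixOrder in
theorem PosSemidef.exists_eq_conjTranspose_mul_self {𝕜 : Type*} [RCLike 𝕜]
    {T : Matrix ι ι 𝕜} (hT : T.PosSemidef) : ∃ A : Matrix ι ι 𝕜, T = Aᴴ * A :=
  ⟨CFC.sqrt T, by rw [(CFC.sqrt_nonneg T).posSemidef.1, CFC.sqrt_mul_sqrt_self T hT.nonneg]⟩

theorem re_det_conjTranspose_mul_self (A : Matrix ι ι ℂ) :
    (Aᴴ * A).det.re = Complex.normSq A.det := by
  simp [det_mul, det_conjTranspose, Complex.normSq_apply]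

theorem re_star_dotProduct_conjTranspose_mul_self_mulVec (A : Matrix ι ι ℂ) (v : ι → ℂ) :
    (star v ⬝ᵥ (Aᴴ * A) *ᵥ v).re = ‖toLpLin 2 2 A (toLp 2 v)‖ ^ 2 := by
  rw [← mulVec_mulVec, dotProduct_mulVec, vecMul_conjTranspose, star_star]
  simp [EuclideanSpace.norm_sq_eq, Complex.sq_norm, dotProduct, Complex.normSq_apply]

theorem det_restrictScalars_toLpLin (A : Matrix ι ι ℂ) :
    LinearMap.det ((toLpLin 2 2 A).restrictScalars ℝ) = Complex.normSq A.det := by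
  rw [LinearMap.det_restrictScalars, Algebra.norm_complex_apply, toLpLin_eq_toLin,
    LinearMap.det_toLin]

end Matrix

namespace Matrix.SpecialLinearGroup

variable {ι R : Type*} [Fintype ι] [DecidableEq ι]

theorem transvection_smul_apply [CommRing R] {i j : ι} (hij : i ≠ j) (c : R) (v : ι → R)
    (k : ι) : (transvection hij c • v) k = if k = i then v i + c * v j else v k := by
  rcases eq_or_ne k i with rfl | hk <;>
    simp [SpecialLinearGroup.smul_def, transvection_coe, add_mulVec, single_mulVec, *]

variable [EuclideanDomain R]

theorem exists_smul_apply_eq_zero (v : ι → R) {i j : ι} (hij : i ≠ j) :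
    ∃ γ : SpecialLinearGroup ι R, (γ • v) j = 0 ∧ ∀ k, k ≠ i → k ≠ j → (γ • v) k = v k := by
  induction hb : v j using WellFounded.induction (EuclideanDomain.r_wellFounded (R := R))
    generalizing v i j
  rename_i b ih
  rcases eq_or_ne b 0 with rfl | hb0
  · exact ⟨1, by simpa using hb, fun k _ _ => by simp⟩
  -- Reduce `v i` modulo `v j`, recurse with the roles of `i` and `j` swapped, and finally move
  -- the surviving entry from `j` to `i`.
  set t := transvection hij (-(v i / v j))
  have ht : ∀ k, (t • v) k = if k = i then v i % v j else v k := fun k => by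
    rw [transvection_smul_apply, EuclideanDomain.mod_eq_sub_mul_div]
    split_ifs <;> ring
  obtain ⟨γ, hγi, hγ⟩ := ih (v i % v j) (hb ▸ EuclideanDomain.mod_lt _ (hb ▸ hb0)) (t • v)
    hij.symm (by simp [ht])
  refine ⟨transvection hij.symm (-1) * transvection hij 1 * γ * t, ?_, fun k hki hkj => ?_⟩
  · simp [mul_smul, transvection_smul_apply, hij.symm, hγi]
  · simp only [mul_smul, transvection_smul_apply, hki, hkj, if_false, hγ k hkj hki, ht]

theorem exists_smul_eq_single (v : ι → R) (i : ι) :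
    ∃ γ : SpecialLinearGroup ι R, ∃ g : R, γ • v = Pi.single i g := by
  have hclear :
      ∀ s : Finset ι, i ∉ s → ∃ γ : SpecialLinearGroup ι R, ∀ k ∈ s, (γ • v) k = 0 := by
    intro s
    induction s using Finset.induction_on with
    | empty => exact fun _ => ⟨1, by simp⟩
    | insert j s hjs ih =>
      intro hi
      rw [Finset.mem_insert, not_or] at hi
      obtain ⟨γ, hγ⟩ := ih hi.2
      obtain ⟨γ', hγ'j, hγ'⟩ := exists_smul_apply_eq_zero (γ • v) hi.1
      refine ⟨γ' * γ, by simpa [mul_smul, hγ'j] using fun k hk =>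
        (hγ' k (by rintro rfl; exact hi.2 hk) (by rintro rfl; exact hjs hk)).trans (hγ k hk)⟩
  obtain ⟨γ, hγ⟩ := hclear (Finset.univ.erase i) (by simp)
  refine ⟨γ, (γ • v) i, funext fun k => ?_⟩
  rcases eq_or_ne k i with rfl | hk
  · simp
  · simp [hk, hγ k (by simp [hk])]

theorem exists_eq_smul_col (v : ι → R) (i : ι) :
    ∃ γ : SpecialLinearGroup ι R, ∃ g : R, v = g • (γ : Matrix ι ι R)ᵀ i := by
  obtain ⟨γ, g, hγ⟩ := exists_smul_eq_single v i
  refine ⟨γ⁻¹, g, ?_⟩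
  rw [← inv_smul_smul γ v, hγ, SpecialLinearGroup.smul_def, smul_eq_mulVec, mulVec_single]
  ext k
  simp [mul_comm]

end Matrix.SpecialLinearGroup

namespace GaussianInt

theorem one_le_normSq_toComplex {z : GaussianInt} (hz : z ≠ 0) :
    1 ≤ Complex.normSq (toComplex z) := by
  rw [← intCast_real_norm]
  exact_mod_cast norm_pos.mpr hz

noncomputable def latticeBasis (ι : Type*) [Fintype ι] [DecidableEq ι] :
    Module.Basis (Fin 2 × ι) ℝ (EuclideanSpace ℂ ι) :=
  Complex.basisOneI.smulTower (EuclideanSpace.basisFun ι ℂ).toBasis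

variable {ι : Type*} [Fintype ι] [DecidableEq ι]

theorem exists_eq_toComplex_of_mem_span_latticeBasis {x : EuclideanSpace ℂ ι}
    (hx : x ∈ Submodule.span ℤ (Set.range (latticeBasis ι))) :
    ∃ w : ι → GaussianInt, x = toLp 2 (toComplex ∘ w) := by
  rw [Module.Basis.mem_span_iff_repr_mem] at hx
  choose m hm using hx
  refine ⟨fun j => ⟨m (0, j), m (1, j)⟩, ?_⟩
  ext j
  have h0 := hm (0, j)
  have h1 := hm (1, j)
  simp [latticeBasis, Module.Basis.smulTower_repr, Complex.coe_basisOneI_repr] at h0 h1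
  apply Complex.ext <;> simp [toComplex_def', h0, h1]

theorem exists_ne_zero_re_star_dotProduct_mulVec_le [Nonempty ι] :
    ∃ B : ℝ, 0 < B ∧ ∀ T : Matrix ι ι ℂ, T.PosDef → ∃ w : ι → GaussianInt, w ≠ 0 ∧
      (star (toComplex ∘ w) ⬝ᵥ T *ᵥ (toComplex ∘ w)).re ≤
        B * T.det.re ^ ((1 : ℝ) / Fintype.card ι) := by
  obtain ⟨C, hC, hmin⟩ := exists_ne_zero_mem_span_norm_pow_le_mul_abs_det (latticeBasis ι)
  refine ⟨C ^ ((1 : ℝ) / Fintype.card ι), by positivity, fun T hT => ?_⟩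
  obtain ⟨A, rfl⟩ := hT.posSemidef.exists_eq_conjTranspose_mul_self
  have hdet : 0 < Complex.normSq A.det := by
    rw [← re_det_conjTranspose_mul_self]
    exact (Complex.pos_iff.mp hT.det_pos).1
  obtain ⟨x, hxL, hx0, hx⟩ := hmin _ (by rw [det_restrictScalars_toLpLin]; exact hdet.ne')
  obtain ⟨w, rfl⟩ := exists_eq_toComplex_of_mem_span_latticeBasis hxL
  refine ⟨w, by rintro rfl; exact hx0 (by ext; simp), ?_⟩
  rw [Module.finrank_eq_card_basis (latticeBasis ι), det_restrictScalars_toLpLin,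
    abs_of_pos hdet] at hx
  rw [re_star_dotProduct_conjTranspose_mul_self_mulVec, re_det_conjTranspose_mul_self,
    ← Real.mul_rpow hC.le hdet.le, one_div,
    Real.le_rpow_inv_iff_of_pos (by positivity) (by positivity) (by positivity),
    Real.rpow_natCast, ← pow_mul]
  simpa [mul_comm] using hx

end GaussianInt

/-- For every `n ≥ 1` there exists a constant `B > 0` with the following property: for
every `n×n` complex positive definite (Hermitian) matrix `T` there exists
`γ ∈ SL_n(ℤ[i])` (Gaussian-integer entries, determinant 1) such that, viewing `γ` as a
complex matrix via the canonical embedding `ℤ[i] → ℂ`,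
`Re((γᴴ · T · γ)₀₀) ≤ B · Re(det T)^{1/n}`. -/
theorem stmt_15 (n : ℕ) (hn : 1 ≤ n) :
    ∃ B : ℝ, 0 < B ∧ ∀ T : Matrix (Fin n) (Fin n) ℂ, T.PosDef →
      ∃ γ : Matrix.SpecialLinearGroup (Fin n) GaussianInt,
        letI g : Matrix (Fin n) (Fin n) ℂ :=
          ((γ : Matrix (Fin n) (Fin n) GaussianInt)).map
            (fun a : GaussianInt => GaussianInt.toComplex a)
        ((gᴴ * T * g) ⟨0, hn⟩ ⟨0, hn⟩).re ≤ B * T.det.re ^ ((1 : ℝ) / n) := by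
  have : Nonempty (Fin n) := ⟨⟨0, hn⟩⟩
  obtain ⟨B, hB, hmin⟩ := GaussianInt.exists_ne_zero_re_star_dotProduct_mulVec_le (ι := Fin n)
  refine ⟨B, hB, fun T hT => ?_⟩
  obtain ⟨w, hw0, hw⟩ := hmin T hT
  obtain ⟨γ, g, rfl⟩ := SpecialLinearGroup.exists_eq_smul_col w ⟨0, hn⟩
  have hg : g ≠ 0 := by rintro rfl; exact hw0 (zero_smul _ _)
  have hcol : GaussianInt.toComplex ∘ (g • (γ : Matrix (Fin n) (Fin n) GaussianInt)ᵀ ⟨0, hn⟩) =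
      GaussianInt.toComplex g • ((γ : Matrix (Fin n) (Fin n) GaussianInt).map
        GaussianInt.toComplex)ᵀ ⟨0, hn⟩ :=
    funext fun _ => map_mul _ _ _
  rw [hcol, Fintype.card_fin] at hw
  refine ⟨γ, le_trans ?_ hw⟩
  rw [conjTranspose_mul_mul_apply_self]
  exact hT.posSemidef.re_star_dotProduct_mulVec_le_smul _ (GaussianInt.one_le_normSq_toComplex hg)
end
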